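/- Let ξ, ζ ∈ ℝ and define θ(x,y) := ((x−ξ)² + (y−ζ)²)/24. Then for every h > 0: (i) for the interior stencil C₀,₀ = 20, C₀,±1 = C±1,₀ = −4, C±1,±1 = −1 and every (x,y) ∈ ℝ², ∑_{k=−1}^{1} ∑_{ℓ=−1}^{1} C_{k,ℓ}·θ(x+kh, y+ℓh) = −h²; (ii) for a₁, a₂ > 0, α := a₁/a₂, the vertical-interface stencil C₁,₀ = −4, C₁,±1 = −1, C₋₁,±1 = −α, C₀,±1 = −2(1+α), C₋₁,₀ = −4α, C₀,₀ = 10(1+α), and every y ∈ ℝ, ∑_{k,ℓ} C_{k,ℓ}·θ(ξ+kh, y+ℓh) = −h²·(a₁+a₂)/(2a₂); (iii) for a₁, a₂, a₃, a₄ > 0 and the cross-point stencil C₋₁,₁ = −a₁²(a₂+a₃)/(a₂²(a₁+a₄)), C₀,₁ = −2(a₁+a₂)/a₂, C₁,₁ = −1, C₋₁,₀ = −2a₁(a₂+a₃)/a₂², C₀,₀ = 5(a₂+a₃)(a₁+a₂)/a₂², C₁,₀ = −2(a₂+a₃)/a₂, C₋₁,−1 = −a₁a₄(a₂+a₃)/(a₂²(a₁+a₄)),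 C₀,−1 = −2a₃(a₁+a₂)/a₂², C₁,−1 = −a₃/a₂, ∑_{k,ℓ} C_{k,ℓ}·θ(ξ+kh, ζ+ℓh) = −h²·(a₁+a₂)(a₂+a₃)/(4a₂²). -/
import Mathlib


open Finset

/-- the interior 9-point stencil coefficients. -/
noncomputable def C0 : ℤ → ℤ → ℝ := fun k l =>
  if k = 0 ∧ l = 0 then 20 else if k = 0 ∨ l = 0 then -4 else -1

/-- the 9-point stencil coefficients at a grid point on the vertical interface. -/
noncomputable def Cint (α : ℝ) : ℤ → ℤ → ℝ := fun k l =>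
  if k = 1 ∧ l = 0 then -4
  else if k = 1 then -1
  else if k = -1 ∧ l = 0 then -4 * α
  else if k = -1 then -α
  else if l = 0 then 10 * (1 + α)
  else -2 * (1 + α)

/-- the 9-point stencil coefficients at the interface intersection grid point. -/
noncomputable def Ccross (a₁ a₂ a₃ a₄ : ℝ) : ℤ → ℤ → ℝ := fun k l =>
  if k = -1 ∧ l = 1 then -a₁^2*(a₂+a₃) / (a₂^2*(a₁+a₄))
  else if k = 0 ∧ l = 1 then -2*(a₁+a₂)/a₂
  else if k = 1 ∧ l = 1 then -1
  else if k = -1 ∧ l = 0 then -2*a₁*(a₂+a₃)/a₂^2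
  else if k = 0 ∧ l = 0 then 5*(a₂+a₃)*(a₁+a₂)/a₂^2
  else if k = 1 ∧ l = 0 then -2*(a₂+a₃)/a₂
  else if k = -1 ∧ l = -1 then -a₁*a₄*(a₂+a₃) / (a₂^2*(a₁+a₄))
  else if k = 0 ∧ l = -1 then -2*a₃*(a₁+a₂)/a₂^2
  else -a₃/a₂

/-- the comparison function `θ`. -/
noncomputable def θcmp (ξ ζ x y : ℝ) : ℝ := ((x - ξ)^2 + (y - ζ)^2) / 24

theorem stmt15 (ξ ζ : ℝ) (h : ℝ) (hh : 0 < h) :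
    (∀ x y : ℝ,
      (∑ k ∈ Finset.Icc (-1 : ℤ) 1, ∑ l ∈ Finset.Icc (-1 : ℤ) 1,
        C0 k l * θcmp ξ ζ (x + (k : ℝ) * h) (y + (l : ℝ) * h)) = -h^2) ∧
    (∀ a₁ a₂ : ℝ, 0 < a₁ → 0 < a₂ → ∀ y : ℝ,
      (∑ k ∈ Finset.Icc (-1 : ℤ) 1, ∑ l ∈ Finset.Icc (-1 : ℤ) 1,
        Cint (a₁ / a₂) k l * θcmp ξ ζ (ξ + (k : ℝ) * h) (y + (l : ℝ) * h))
        = -h^2 * (a₁ + a₂) / (2 * a₂)) ∧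
    (∀ a₁ a₂ a₃ a₄ : ℝ, 0 < a₁ → 0 < a₂ → 0 < a₃ → 0 < a₄ →
      (∑ k ∈ Finset.Icc (-1 : ℤ) 1, ∑ l ∈ Finset.Icc (-1 : ℤ) 1,
        Ccross a₁ a₂ a₃ a₄ k l * θcmp ξ ζ (ξ + (k : ℝ) * h) (ζ + (l : ℝ) * h))
        = -h^2 * (a₁ + a₂) * (a₂ + a₃) / (4 * a₂^2)) := by
  
  have hI : Finset.Icc (-1 : ℤ) 1 = {-1, 0, 1} := by decide
  refine ⟨?_, ?_, ?_⟩
  · intro x y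
    simp only [hI, Finset.sum_insert, Finset.mem_insert, Finset.mem_singleton,
      Finset.sum_singleton]
    norm_num [C0, θcmp]
    ring
  · intro a₁ a₂ h1 h2 y
    simp only [hI, Finset.sum_insert, Finset.mem_insert, Finset.mem_singleton,
      Finset.sum_singleton]
    norm_num [Cint, θcmp]
    field_simp
    ring
  · intro a₁ a₂ a₃ a₄ h1 h2 h3 h4
    simp only [hI, Finset.sum_insert, Finset.mem_insert, Finset.mem_singleton,
      Finset.sum_singleton]
    norm_num [Ccross, θcmp]
    field_simp
    ring
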